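/- Let \widetilde{C} \subseteq \mathbb{F}_2^{n+1} be a self-orthogonal linear code all of whose codewords have even weight, and let S \subseteq \mathbb{F}_2^n be the image of \widetilde{C} under puncturing the last coordinate. Then S is a q-isotropic subspace of \mathbb{F}_2^n. -/

import Mathlib

/-! Since a codeword `c` of `C̃` has even weight, its last bit equals the parity of the weight of
its puncture `Fin.init c`. Hence `q (Fin.init c) (Fin.init c')` recovers the full inner product
`c · c'`, which vanishes by self-orthogonality. -/

noncomputable def q {n : ℕ} (x y : Fin n → ZMod 2) : ZMod 2 :=
  (∑ i, x i * y i) + (hammingNorm x : ZMod 2) * (hammingNorm y : ZMod 2)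

noncomputable def extend {n : ℕ} (x : Fin n → ZMod 2) : Fin (n + 1) → ZMod 2 :=
  Fin.snoc x (hammingNorm x : ZMod 2)

lemma hammingNorm_cast_zmod_two {ι : Type*} [Fintype ι] (x : ι → ZMod 2) :
    (hammingNorm x : ZMod 2) = ∑ i, x i := by
  rw [hammingNorm, Finset.card_filter, Nat.cast_sum]
  refine Finset.sum_congr rfl fun i _ => ?_
  generalize x i = a
  fin_cases a <;> rfl

lemma hammingNorm_init_cast_eq_last {n : ℕ} {c : Fin (n + 1) → ZMod 2}
    (hc : Even (hammingNorm c)) : (hammingNorm (Fin.init c) : ZMod 2) = c (Fin.last n) := by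
  have h := hc.natCast_zmod_two
  rw [hammingNorm_cast_zmod_two, Fin.sum_univ_castSucc] at h
  rw [hammingNorm_cast_zmod_two, ← ZMod.neg_eq_self_mod_two (c _)]
  exact eq_neg_of_add_eq_zero_left h

lemma q_init_init_eq_sum_mul {n : ℕ} {c c' : Fin (n + 1) → ZMod 2} (hc : Even (hammingNorm c))
    (hc' : Even (hammingNorm c')) : q (Fin.init c) (Fin.init c') = ∑ i, c i * c' i := by
  rw [q, hammingNorm_init_cast_eq_last hc, hammingNorm_init_cast_eq_last hc',
    Fin.sum_univ_castSucc]
  rfl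

theorem punctured_code_isotropic {n : ℕ}
    (Ct : Submodule (ZMod 2) (Fin (n + 1) → ZMod 2))
    (heven : ∀ c ∈ Ct, Even (hammingNorm c))
    (horth : ∀ c ∈ Ct, ∀ c' ∈ Ct, (∑ i, c i * c' i) = 0)
    (S : Set (Fin n → ZMod 2))
    (hS : S = Fin.init '' (Ct : Set (Fin (n + 1) → ZMod 2))) :
    (∃ S' : Submodule (ZMod 2) (Fin n → ZMod 2), (S' : Set (Fin n → ZMod 2)) = S) ∧
      ∀ x ∈ S, ∀ y ∈ S, q x y = 0 := by
  subst hS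
  refine ⟨⟨Ct.map (LinearMap.funLeft (ZMod 2) (ZMod 2) Fin.castSucc), Submodule.map_coe _ _⟩, ?_⟩
  rintro _ ⟨c, hc, rfl⟩ _ ⟨c', hc', rfl⟩
  rw [q_init_init_eq_sum_mul (heven c hc) (heven c' hc')]
  exact horth c hc c' hc'
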